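/- Define a curvature tensor R on C^7 with unitary frame {E_1,...,E_7} by: R(E_7,Ē_7,E_7,Ē_7) = 1, R(E_i,Ē_j,E_7,Ē_7) = (1/2)δ_{ij} for 1 ≤ i,j ≤ 6, R(E_i,Ē_j,E_k,Ē_7) = 0 for 1 ≤ i,j,k ≤ 6, and for indices written as pairs (a,i), (b,j), (c,k), (d,l) with a,b,c,d ∈ {1,2}, i,j,k,l ∈ {3,4,5} (identifying {1,...,6} with such pairs): R = -(1/2)(δ_{ad}δ_{bc} + δ_{ab}δ_{cd}) δ_{i,8-k} δ_{j,8-l} + δ_{ad}δ_{bc}δ_{ij}δ_{kl} + δ_{ab}δ_{cd}δ_{il}δ_{jk}, extended with Kähler curvature symmetries. Then R is Einstein with Ricci curvature identically equal to 4: for each i, ∑_{j=1}^7 R(E_i,Ē_i,E_j,Ē_j) = 4. -/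
import Mathlib


/-- Kronecker delta (as a complex number) for the `{1,2}`-part of the double
index: index `m ∈ {0,…,5}` corresponds to the pair `(a, i) = (m/3 + 1, m%3 + 3)`
(1-based), i.e. the frame order `F₁₃, F₁₄, F₁₅, F₂₃, F₂₄, F₂₅`. -/
noncomputable def da (p q : Fin 7) : ℂ := if (p : ℕ) / 3 = (q : ℕ) / 3 then 1 else 0

/-- Kronecker delta `δ_{ij}` for the `{3,4,5}`-part of the double index. -/
noncomputable def di (p q : Fin 7) : ℂ := if (p : ℕ) % 3 = (q : ℕ) % 3 then 1 else 0

/-- Kronecker delta `δ_{i, 8-k}` for the `{3,4,5}`-part: in 0-based residues,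
`i + k = 2`. -/
noncomputable def di8 (p q : Fin 7) : ℂ := if (p : ℕ) % 3 + (q : ℕ) % 3 = 2 then 1 else 0

/-- The curvature components `R_{(a,i)(b,j)̄(c,k)(d,l)̄}` among `𝔪⁺₁`-directions:
`-(1/2)(δ_{ad}δ_{bc} + δ_{ab}δ_{cd})δ_{i,8-k}δ_{j,8-l} + δ_{ad}δ_{bc}δ_{ij}δ_{kl}
 + δ_{ab}δ_{cd}δ_{il}δ_{jk}`. -/
noncomputable def RB (p q r s : Fin 7) : ℂ :=
  -(1/2) * (da p s * da q r + da p q * da r s) * di8 p r * di8 q s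
    + da p s * da q r * di p q * di r s
    + da p q * da r s * di p s * di q r

/-- The full curvature tensor of `(B₃, α₂)` in the Weyl unitary frame
`{E₁, …, E₆; E₇}` (0-based: `E₇` is the index `6`), extended by the Kähler
curvature symmetries: `R_{7 7̄ 7 7̄} = 1`, `R_{i j̄ 7 7̄} = (1/2)δ_{ij}`,
`R_{i j̄ k 7̄} = 0`, and `RB` among the first six directions. -/
noncomputable def Rc (p q r s : Fin 7) : ℂ :=
  if p = 6 then
    if q = 6 then
      if r = 6 then (if s = 6 then 1 else 0)
      else if s = 6 then 0 else (if r = s then 1/2 else 0)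
    else
      if r = 6 then 0
      else if s = 6 then (if q = r then 1/2 else 0) else 0
  else
    if q = 6 then
      if r = 6 then (if s = 6 then 0 else (if p = s then 1/2 else 0)) else 0
    else
      if r = 6 then (if s = 6 then (if p = q then 1/2 else 0) else 0)
      else if s = 6 then 0 else RB p q r s

/-- The curvature tensor of `(B₃, α₂)` is Einstein with Ricci curvature
identically equal to `4`. -/
theorem stmt16 : ∀ i : Fin 7, ∑ j, Rc i i j j = 4 := by
  intro i
  fin_cases i <;>
    simp [Rc, RB, da, di, di8, Fin.sum_univ_seven,
      show ((3:Fin 7):ℕ)=3 from rfl, show ((4:Fin 7):ℕ)=4 from rfl,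
      show ((5:Fin 7):ℕ)=5 from rfl] <;> norm_num
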